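/- For nonnegative integer N, ν ∈ {0,1}, and any integer k, the generating function B_{2N+ν}(k,q) for partitions into distinct parts ≤ 2N+ν with BG-rank equal to k satisfies B_{2N+ν}(k,q) = q^{2k²−k} · [2N+ν choose N+k]_{q²}. -/

import Mathlib

def IsDistinctPartition (π : List ℕ) : Prop :=
  π.Chain' (· > ·) ∧ ∀ p ∈ π, 0 < p

def IsPartition (π : List ℕ) : Prop :=
  π.Chain' (· ≥ ·) ∧ ∀ p ∈ π, 0 < p

def oddIdxOdd (π : List ℕ) : ℕ :=
  (((List.range π.length).zip π).filter fun p => p.1 % 2 == 0 && p.2 % 2 == 1).length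

def evenIdxOdd (π : List ℕ) : ℕ :=
  (((List.range π.length).zip π).filter fun p => p.1 % 2 == 1 && p.2 % 2 == 1).length

def bgRank (π : List ℕ) : ℤ := (oddIdxOdd π : ℤ) - evenIdxOdd π

def altSum : List ℕ → ℤ
  | [] => 0
  | a :: t => (a : ℤ) - altSum t

noncomputable def gaussPoly : ℕ → ℕ → Polynomial ℚ
  | _, 0 => 1
  | 0, _ + 1 => 0
  | m + 1, r + 1 => gaussPoly m r + Polynomial.X ^ (r + 1) * gaussPoly m (r + 1)

noncomputable def gaussZ (m : ℕ) (r : ℤ) : Polynomial ℚ :=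
  if 0 ≤ r then gaussPoly m r.toNat else 0

/-!
Deleting the largest admissible part `M + 1` from a partition into distinct parts `≤ M + 1`
shifts every remaining part by one position, so the BG-rank `k` becomes `(M + 1) % 2 - k`.
Hence `B_{M+1}(k, q) = B_M(k, q) + q^(M+1) B_M((M + 1) % 2 - k, q)`. The closed form
`q^(2k²-k) [M choose ⌊M/2⌋ + k]_{q²}` satisfies the same recurrence: for even `M` by the
q-Pascal rule `[m+1, r] = q^(m+1-r) [m, r-1] + [m, r]`, for odd `M` by `[m+1, r] = [m, r-1] +
q^r [m, r]`, each time combined with the symmetry `[m, m-r] = [m, r]`. Both sides equal `δ_{k,0}`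
for `M = 0`.
-/

lemma length_filter_zip_range_cons (P : ℕ × ℕ → Bool) (a : ℕ) (t : List ℕ) :
    (((List.range (a :: t).length).zip (a :: t)).filter P).length =
      (if P (0, a) then 1 else 0) +
        (((List.range t.length).zip t).filter fun q => P (q.1 + 1, q.2)).length := by
  rw [List.length_cons, List.range_succ_eq_map, List.zip_cons_cons, List.zip_map_left,
    List.filter_cons, List.filter_map]
  split <;> simp [add_comm] <;> rfl

lemma oddIdxOdd_cons (a : ℕ) (t : List ℕ) : oddIdxOdd (a :: t) = a % 2 + evenIdxOdd t := by
  rw [oddIdxOdd, length_filter_zip_range_cons, evenIdxOdd]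
  congr 1
  · rcases Nat.mod_two_eq_zero_or_one a with h | h <;> simp [h]
  · congr 2
    funext q
    rcases Nat.mod_two_eq_zero_or_one q.1 with h | h <;> simp [Nat.add_mod, h]

lemma evenIdxOdd_cons (a : ℕ) (t : List ℕ) : evenIdxOdd (a :: t) = oddIdxOdd t := by
  rw [evenIdxOdd, length_filter_zip_range_cons, oddIdxOdd, if_neg (by simp), zero_add]
  congr 2
  funext q
  rcases Nat.mod_two_eq_zero_or_one q.1 with h | h <;> simp [Nat.add_mod, h]

lemma bgRank_cons (a : ℕ) (t : List ℕ) : bgRank (a :: t) = (a % 2 : ℕ) - bgRank t := by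
  rw [bgRank, bgRank, oddIdxOdd_cons, evenIdxOdd_cons]
  push_cast
  ring

lemma isDistinctPartition_iff_pairwise {π : List ℕ} :
    IsDistinctPartition π ↔ π.Pairwise (· > ·) ∧ ∀ p ∈ π, 0 < p :=
  and_congr_left' List.isChain_iff_pairwise

lemma IsDistinctPartition.pairwise {π : List ℕ} (h : IsDistinctPartition π) :
    π.Pairwise (· > ·) :=
  (isDistinctPartition_iff_pairwise.mp h).1

lemma isDistinctPartition_cons {a : ℕ} {t : List ℕ} :
    IsDistinctPartition (a :: t) ↔ 0 < a ∧ (∀ p ∈ t, p < a) ∧ IsDistinctPartition t := by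
  simp only [isDistinctPartition_iff_pairwise, List.pairwise_cons, List.forall_mem_cons]
  tauto

lemma IsDistinctPartition.eq_cons_of_mem {π : List ℕ} {a : ℕ} (h : IsDistinctPartition π)
    (hle : ∀ p ∈ π, p ≤ a) (ha : a ∈ π) : π = a :: π.tail := by
  obtain _ | ⟨b, t⟩ := π
  · cases ha
  · obtain rfl | hat := List.mem_cons.mp ha
    · rfl
    · have := (List.pairwise_cons.mp h.pairwise).1 a hat
      have := hle b List.mem_cons_self
      omega

lemma forall_le_succ_and_notMem_iff {π : List ℕ} {M : ℕ} :
    (∀ p ∈ π, p ≤ M + 1) ∧ M + 1 ∉ π ↔ ∀ p ∈ π, p ≤ M :=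
  ⟨fun h p hp => Nat.le_of_lt_succ <| (h.1 p hp).lt_of_ne fun he => h.2 (he ▸ hp),
    fun h => ⟨fun p hp => (h p hp).trans M.le_succ, fun hp => (h _ hp).not_gt M.lt_succ_self⟩⟩

abbrev DistinctBGPartition (M : ℕ) (k : ℤ) (n : ℕ) : Type :=
  {π : List ℕ // IsDistinctPartition π ∧ (∀ p ∈ π, p ≤ M) ∧ π.sum = n ∧ bgRank π = k}

namespace DistinctBGPartition

instance (M : ℕ) (k : ℤ) (n : ℕ) : Finite (DistinctBGPartition M k n) := by
  refine Finite.of_injective (β := n.Partition)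
    (fun π => ⟨π.1, fun hp => π.2.1.2 _ hp, by simp [π.2.2.2.1]⟩) fun π σ h => ?_
  have hperm : π.1.Perm σ.1 := Multiset.coe_eq_coe.mp (congrArg Nat.Partition.parts h)
  exact Subtype.ext <|
    hperm.eq_of_pairwise' (π.2.1.pairwise.imp le_of_lt) (σ.2.1.pairwise.imp le_of_lt)

lemma card_zero (k : ℤ) (n : ℕ) :
    Nat.card (DistinctBGPartition 0 k n) = if k = 0 ∧ n = 0 then 1 else 0 := by
  have hiff : ∀ π : List ℕ,
      (IsDistinctPartition π ∧ (∀ p ∈ π, p ≤ 0) ∧ π.sum = n ∧ bgRank π = k) ↔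
        π = [] ∧ k = 0 ∧ n = 0 := by
    rintro (_ | ⟨a, t⟩)
    · simp [isDistinctPartition_iff_pairwise, bgRank, oddIdxOdd, evenIdxOdd, eq_comm, and_comm]
    · simp only [isDistinctPartition_cons, List.forall_mem_cons, reduceCtorEq, false_and,
        iff_false]
      omega
  rw [DistinctBGPartition, Nat.card_congr (Equiv.subtypeEquivRight hiff)]
  split_ifs with h <;> simp [h]

def notMemEquiv (M : ℕ) (k : ℤ) (n : ℕ) :
    {π : DistinctBGPartition (M + 1) k n // M + 1 ∉ π.1} ≃ DistinctBGPartition M k n where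
  toFun π := ⟨π.1.1, π.1.2.1, forall_le_succ_and_notMem_iff.mp ⟨π.1.2.2.1, π.2⟩, π.1.2.2.2⟩
  invFun σ := ⟨⟨σ.1, σ.2.1, (forall_le_succ_and_notMem_iff.mpr σ.2.2.1).1, σ.2.2.2⟩,
    (forall_le_succ_and_notMem_iff.mpr σ.2.2.1).2⟩
  left_inv _ := rfl
  right_inv _ := rfl

lemma succ_cons_iff (M : ℕ) (k : ℤ) (n : ℕ) (τ : List ℕ) :
    (IsDistinctPartition ((M + 1) :: τ) ∧ (∀ p ∈ (M + 1) :: τ, p ≤ M + 1) ∧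
        ((M + 1) :: τ).sum = n + (M + 1) ∧ bgRank ((M + 1) :: τ) = k) ↔
      IsDistinctPartition τ ∧ (∀ p ∈ τ, p ≤ M) ∧ τ.sum = n ∧
        bgRank τ = ((M + 1) % 2 : ℕ) - k := by
  simp only [isDistinctPartition_cons, List.forall_mem_cons, List.sum_cons, bgRank_cons]
  constructor
  · rintro ⟨⟨-, hlt, hd⟩, ⟨-, hle⟩, hs, hr⟩
    exact ⟨hd, fun p hp => Nat.le_of_lt_succ (hlt p hp), by omega, by omega⟩
  · rintro ⟨hd, hle, hs, hr⟩
    exact ⟨⟨M.succ_pos, fun p hp => Nat.lt_succ_of_le (hle p hp), hd⟩,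
      ⟨le_rfl, fun p hp => (hle p hp).trans M.le_succ⟩, by omega, by omega⟩

def memEquiv (M : ℕ) (k : ℤ) (n : ℕ) :
    {π : DistinctBGPartition (M + 1) k (n + (M + 1)) // M + 1 ∈ π.1} ≃
      DistinctBGPartition M (((M + 1) % 2 : ℕ) - k) n where
  toFun π := ⟨π.1.1.tail, (succ_cons_iff M k n _).mp <|
    (π.1.2.1.eq_cons_of_mem π.1.2.2.1 π.2) ▸ π.1.2⟩
  invFun τ := ⟨⟨(M + 1) :: τ.1, (succ_cons_iff M k n _).mpr τ.2⟩, List.mem_cons_self⟩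
  left_inv π := Subtype.ext <| Subtype.ext (π.1.2.1.eq_cons_of_mem π.1.2.2.1 π.2).symm
  right_inv _ := rfl

lemma card_succ (M : ℕ) (k : ℤ) (n : ℕ) :
    Nat.card (DistinctBGPartition (M + 1) k n) = Nat.card (DistinctBGPartition M k n) +
      if M + 1 ≤ n then Nat.card (DistinctBGPartition M (((M + 1) % 2 : ℕ) - k) (n - (M + 1)))
      else 0 := by
  rw [← Nat.card_congr (Equiv.sumCompl fun π : DistinctBGPartition (M + 1) k n => M + 1 ∈ π.1),
    Nat.card_sum, Nat.card_congr (notMemEquiv M k n), add_comm]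
  congr 1
  split_ifs with h
  · obtain ⟨d, rfl⟩ := Nat.exists_eq_add_of_le' h
    rw [Nat.add_sub_cancel]
    exact Nat.card_congr (memEquiv M k d)
  · have : IsEmpty {π : DistinctBGPartition (M + 1) k n // M + 1 ∈ π.1} :=
      ⟨fun π => h (π.1.2.2.2.1 ▸ List.le_sum_of_mem π.2)⟩
    exact Nat.card_of_isEmpty

end DistinctBGPartition

noncomputable def bgGenFun (M : ℕ) (k : ℤ) : PowerSeries ℚ :=
  PowerSeries.mk fun n => (Nat.card (DistinctBGPartition M k n) : ℚ)

lemma bgGenFun_zero (k : ℤ) : bgGenFun 0 k = if k = 0 then 1 else 0 := by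
  ext n
  rw [bgGenFun, PowerSeries.coeff_mk, DistinctBGPartition.card_zero]
  split_ifs <;> simp_all [PowerSeries.coeff_one]

lemma bgGenFun_succ (M : ℕ) (k : ℤ) :
    bgGenFun (M + 1) k =
      bgGenFun M k + PowerSeries.X ^ (M + 1) * bgGenFun M (((M + 1) % 2 : ℕ) - k) := by
  ext n
  rw [map_add, PowerSeries.coeff_X_pow_mul']
  simp only [bgGenFun, PowerSeries.coeff_mk, DistinctBGPartition.card_succ]
  split_ifs <;> push_cast <;> rfl

section GaussZ

open Polynomial

/- Extended by zero to negative `r`, both q-Pascal rules and the symmetry hold for every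
`r : ℤ`, with no side conditions. -/

lemma gaussZ_of_neg {m : ℕ} {r : ℤ} (h : r < 0) : gaussZ m r = 0 := if_neg (by omega)

lemma gaussZ_zero_right (m : ℕ) : gaussZ m 0 = 1 := by
  cases m <;> rfl

lemma gaussZ_succ (m : ℕ) (r : ℤ) :
    gaussZ (m + 1) r = gaussZ m (r - 1) + X ^ r.toNat * gaussZ m r := by
  rcases r with (_ | s) | s
  · simp [gaussZ_zero_right, gaussZ_of_neg]
  · simp [gaussZ]
    rfl
  · simp [gaussZ_of_neg, Int.negSucc_lt_zero]

lemma gaussZ_eq_zero_of_lt {m : ℕ} {r : ℤ} (h : m < r) : gaussZ m r = 0 := by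
  induction m generalizing r with
  | zero =>
    obtain ⟨s, rfl⟩ : ∃ s : ℕ, r = s + 1 := ⟨r.toNat - 1, by omega⟩
    rw [gaussZ, if_pos (by omega), show ((s : ℤ) + 1).toNat = s + 1 by omega]
    rfl
  | succ m ih =>
    rw [gaussZ_succ, ih (by omega), ih (by omega), mul_zero, add_zero]

lemma gaussZ_zero_left (r : ℤ) : gaussZ 0 r = if r = 0 then 1 else 0 := by
  split_ifs with h
  · rw [h, gaussZ_zero_right]
  · rcases lt_or_gt_of_ne h with h | h
    · exact gaussZ_of_neg h
    · exact gaussZ_eq_zero_of_lt (by omega)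

lemma gaussZ_succ' (m : ℕ) (r : ℤ) :
    gaussZ (m + 1) r = X ^ (m + 1 - r).toNat * gaussZ m (r - 1) + gaussZ m r := by
  induction m generalizing r with
  | zero =>
    rw [gaussZ_succ]
    obtain rfl | hr := eq_or_ne r 1
    · simp [gaussZ_zero_left]
    · simp only [gaussZ_zero_left, sub_eq_zero, hr]
      split_ifs <;> simp_all
  | succ m ih =>
    rw [gaussZ_succ (m + 1) r]
    conv_lhs => rw [ih (r - 1), ih r]
    conv_rhs => rw [gaussZ_succ m (r - 1), gaussZ_succ m r]
    by_cases hr : 0 ≤ r - 1 ∧ r - 1 ≤ m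
    · have hexp : X ^ r.toNat * X ^ (m + 1 - r).toNat =
          (X : ℚ[X]) ^ (m + 1 + 1 - r).toNat * X ^ (r - 1).toNat := by
        rw [← pow_add, ← pow_add]
        congr 1
        omega
      rw [show (m : ℤ) + 1 - (r - 1) = m + 1 + 1 - r by ring]
      push_cast
      linear_combination gaussZ m (r - 1) * hexp
    · have hzero : gaussZ m (r - 1) = 0 := by
        rcases not_and_or.mp hr with h | h
        · exact gaussZ_of_neg (by omega)
        · exact gaussZ_eq_zero_of_lt (by omega)
      push_cast
      rw [hzero]
      ring_nf

lemma gaussZ_symm (m : ℕ) (r : ℤ) : gaussZ m (m - r) = gaussZ m r := by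
  induction m generalizing r with
  | zero => simp [gaussZ_zero_left]
  | succ m ih =>
    rw [gaussZ_succ, gaussZ_succ', ← ih r, ← ih (r - 1)]
    push_cast
    ring_nf

end GaussZ

lemma two_mul_sq_sub_self_nonneg (k : ℤ) : 0 ≤ 2 * k ^ 2 - k := by
  nlinarith

section ClosedForm

open Polynomial

variable {A : Type*} [CommRing A] [Algebra ℚ A] (x : A)

noncomputable def bgClosedForm (M : ℕ) (k : ℤ) : A :=
  x ^ (2 * k ^ 2 - k).toNat * aeval (x ^ 2) (gaussZ M ((M / 2 : ℕ) + k))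

lemma bgClosedForm_zero (k : ℤ) : bgClosedForm x 0 k = if k = 0 then 1 else 0 := by
  rw [bgClosedForm, gaussZ_zero_left]
  split_ifs with h <;> simp_all

lemma bgClosedForm_two_mul_add_one (N : ℕ) (k : ℤ) :
    bgClosedForm x (2 * N + 1) k =
      bgClosedForm x (2 * N) k + x ^ (2 * N + 1) * bgClosedForm x (2 * N) (1 - k) := by
  have hsymm : gaussZ (2 * N) (N + (1 - k)) = gaussZ (2 * N) (N + k - 1) := by
    rw [← gaussZ_symm]; congr 1; push_cast; ring
  simp only [bgClosedForm, show (2 * N + 1) / 2 = N by omega, show 2 * N / 2 = N by omega]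
  rw [gaussZ_succ', hsymm, map_add, map_mul, map_pow, aeval_X]
  by_cases hk : k ≤ N + 1
  · have hexp : x ^ (2 * k ^ 2 - k).toNat * (x ^ 2) ^ ((2 * N : ℕ) + 1 - (N + k)).toNat =
        x ^ (2 * N + 1) * x ^ (2 * (1 - k) ^ 2 - (1 - k)).toNat := by
      rw [← pow_mul, ← pow_add, ← pow_add]
      congr 1
      have h₀ := two_mul_sq_sub_self_nonneg k
      have h₁ := two_mul_sq_sub_self_nonneg (1 - k)
      rw [show 2 * (1 - k) ^ 2 - (1 - k) = 2 * k ^ 2 - k - 2 * k + 1 by ring] at h₁ ⊢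
      push_cast
      omega
    linear_combination aeval (x ^ 2) (gaussZ (2 * N) (N + k - 1)) * hexp
  · rw [gaussZ_eq_zero_of_lt (by push_cast; omega)]
    simp

lemma bgClosedForm_two_mul_add_two (N : ℕ) (k : ℤ) :
    bgClosedForm x (2 * N + 2) k =
      bgClosedForm x (2 * N + 1) k + x ^ (2 * N + 2) * bgClosedForm x (2 * N + 1) (-k) := by
  have hsymm : gaussZ (2 * N + 1) (N + -k) = gaussZ (2 * N + 1) (N + 1 + k) := by
    rw [← gaussZ_symm]; congr 1; push_cast; ring
  simp only [bgClosedForm, show (2 * N + 2) / 2 = N + 1 by omega,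
    show (2 * N + 1) / 2 = N by omega]
  rw [gaussZ_succ, hsymm, map_add, map_mul, map_pow, aeval_X,
    show ((N + 1 : ℕ) : ℤ) + k - 1 = N + k by push_cast; ring]
  push_cast
  by_cases hk : -(N + 1) ≤ k
  · have hexp : x ^ (2 * k ^ 2 - k).toNat * (x ^ 2) ^ ((N : ℤ) + 1 + k).toNat =
        x ^ (2 * N + 2) * x ^ (2 * (-k) ^ 2 - -k).toNat := by
      rw [← pow_mul, ← pow_add, ← pow_add]
      congr 1
      have h₀ := two_mul_sq_sub_self_nonneg k
      have h₁ := two_mul_sq_sub_self_nonneg (-k)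
      rw [show 2 * (-k) ^ 2 - -k = 2 * k ^ 2 - k + 2 * k by ring] at h₁ ⊢
      omega
    linear_combination aeval (x ^ 2) (gaussZ (2 * N + 1) (N + 1 + k)) * hexp
  · rw [gaussZ_of_neg (show (N : ℤ) + 1 + k < 0 by omega)]
    simp

lemma bgClosedForm_succ (M : ℕ) (k : ℤ) :
    bgClosedForm x (M + 1) k =
      bgClosedForm x M k + x ^ (M + 1) * bgClosedForm x M (((M + 1) % 2 : ℕ) - k) := by
  obtain ⟨N, rfl | rfl⟩ := Nat.even_or_odd' M
  · rw [show (2 * N + 1) % 2 = 1 by omega]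
    simpa using bgClosedForm_two_mul_add_one x N k
  · rw [show (2 * N + 1 + 1) % 2 = 0 by omega]
    simpa using bgClosedForm_two_mul_add_two x N k

end ClosedForm

theorem bgGenFun_eq_bgClosedForm (M : ℕ) (k : ℤ) :
    bgGenFun M k = bgClosedForm PowerSeries.X M k := by
  induction M generalizing k with
  | zero => rw [bgGenFun_zero, bgClosedForm_zero]
  | succ M ih => rw [bgGenFun_succ, bgClosedForm_succ, ih, ih]

theorem stmt8 (N ν : ℕ) (hν : ν ≤ 1) (k : ℤ) :
    PowerSeries.mk (fun n =>
      (Nat.card {π : List ℕ // IsDistinctPartition π ∧ (∀ p ∈ π, p ≤ 2 * N + ν) ∧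
        π.sum = n ∧ bgRank π = k} : ℚ)) =
    PowerSeries.X ^ (2 * k ^ 2 - k).toNat *
      Polynomial.aeval (PowerSeries.X ^ 2 : PowerSeries ℚ)
        (gaussZ (2 * N + ν) ((N : ℤ) + k)) := by
  have h := bgGenFun_eq_bgClosedForm (2 * N + ν) k
  rwa [bgClosedForm, show (2 * N + ν) / 2 = N by omega] at h
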